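/- arXiv:1705.10619 — 2 statements merged into one kernel-verified Lean document; each statement's English description precedes it below -/
import Mathlib

section
/- Let d ≥ 1, let ω, v be weights on ℝ^d with v submultiplicative and ω v-moderate, let p ∈ (0,∞] and r ∈ (0, min(1,p)]. Then there exists C > 0 such that for every a: ℤ^d → ℂ with ∑_{j∈ℤ^d} (|a(j)|·v(j))^r < ∞ and every measurable f: ℝ^d → ℂ with ‖f·ω‖_{L^p(ℝ^d)} < ∞, the semi-discrete convolution (a ∗ f)(x) = ∑_{j∈ℤ^d} a(j)·f(x−j) converges absolutely for almost every x ∈ ℝ^d and ‖(a ∗ f)·ω‖_{L^p(ℝ^d)} ≤ C·(∑_{j∈ℤ^d} (|a(j)|·v(j))^r)^{1/r}·‖f·ω‖_{L^p(ℝ^d)}. -/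
open MeasureTheory Complex Real
open scoped InnerProductSpace ENNReal

noncomputable section

/-- `ℝ^d` as a Euclidean space. -/
abbrev Ed (d : ℕ) := EuclideanSpace ℝ (Fin d)

/-- The point of the lattice `ℤ^d ⊆ ℝ^d` corresponding to `j : ℤ^d`. -/
def intVec (d : ℕ) (j : Fin d → ℤ) : Ed d := WithLp.toLp 2 (fun i => (j i : ℝ))

/-- A weight on `ℝ^d`: a measurable positive function which is locally bounded together
with its reciprocal. -/
def IsWeight (d : ℕ) (w : Ed d → ℝ) : Prop :=
  Measurable w ∧ (∀ x, 0 < w x) ∧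
    ∀ R : ℝ, ∃ M : ℝ, ∀ x : Ed d, ‖x‖ ≤ R → w x ≤ M ∧ (w x)⁻¹ ≤ M

/-- A weight `v` is submultiplicative: `v` is even and `v(x+y) ≲ v(x)·v(y)`. -/
def Submult (d : ℕ) (v : Ed d → ℝ) : Prop :=
  (∀ x, v (-x) = v x) ∧ ∃ C : ℝ, 0 < C ∧ ∀ x y, v (x + y) ≤ C * v x * v y

/-- `ω` is `v`-moderate: `ω(x+y) ≲ ω(x)·v(y)`. -/
def Moderate (d : ℕ) (ω v : Ed d → ℝ) : Prop :=
  ∃ C : ℝ, 0 < C ∧ ∀ x y, ω (x + y) ≤ C * ω x * v y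

/-!
For `r ≤ min 1 p` the power `‖·‖_{L^p}^r` is countably subadditive: writing
`‖h‖_{L^p}^r = ‖h^r‖_{L^{p/r}}` and using `(∑ hᵢ)^r ≤ ∑ hᵢ^r` pointwise, this is Minkowski's
inequality in `L^{p/r}`, where `p/r ≥ 1`. Moderateness bounds `|(a ∗ f)(x)| ω(x)` by
`C ∑ⱼ |a(j)| v(j) (|f| ω)(x - j)`, a countable sum of translates of `|f| ω`, and translation
preserves `L^p` norms. Since this majorant has finite `L^p` norm, it is finite almost everywhere,
which gives the absolute convergence.
-/

open scoped NNReal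

theorem ENNReal.rpow_tsum_le_tsum_rpow {ι : Type*} (u : ι → ℝ≥0∞) {r : ℝ} (hr0 : 0 < r)
    (hr1 : r ≤ 1) : (∑' i, u i) ^ r ≤ ∑' i, u i ^ r := by
  refine le_of_tendsto' ((ENNReal.continuous_rpow_const.tendsto _).comp ENNReal.summable.hasSum)
    fun s => (Finset.le_sum_of_subadditive (· ^ r) ?_ ?_ s u).trans (ENNReal.sum_le_tsum s)
  · simp [ENNReal.zero_rpow_of_pos hr0]
  · exact fun x y => ENNReal.rpow_add_le_add_rpow x y hr0.le hr1

section LpQuasiTriangle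

variable {α : Type*} [MeasurableSpace α] {μ : Measure α} {p : ℝ≥0∞}

theorem eLpNorm_iSup_le_iSup_eLpNorm {κ : Type*} [Countable κ] {F : κ → α → ℝ≥0∞}
    (hF : ∀ k, AEMeasurable (F k) μ) (hdir : Directed (· ≤ ·) F) :
    eLpNorm (fun x => ⨆ k, F k x) p μ ≤ ⨆ k, eLpNorm (F k) p μ := by
  rcases eq_or_ne p 0 with rfl | hp0
  · simp
  rcases eq_or_ne p ∞ with rfl | hptop
  · rw [eLpNorm_exponent_top]
    refine eLpNormEssSup_le_of_ae_enorm_bound ?_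
    filter_upwards [ae_all_iff.2 fun k => ae_le_eLpNormEssSup (μ := μ) (f := F k)] with x hx
    exact iSup_le fun k => (hx k).trans (le_iSup_of_le k eLpNorm_exponent_top.ge)
  have hq : 0 < p.toReal := ENNReal.toReal_pos hp0 hptop
  have hpow (x : α) : (⨆ k, F k x) ^ p.toReal = ⨆ k, F k x ^ p.toReal :=
    (ENNReal.orderIsoRpow _ hq).map_iSup _
  simp only [eLpNorm_eq_lintegral_rpow_enorm_toReal hp0 hptop, enorm_eq_self, hpow]
  rw [lintegral_iSup_directed (fun k => (hF k).pow_const _)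
    (hdir.mono_comp _ (g := fun f x => f x ^ p.toReal)
      fun f g hfg x => ENNReal.rpow_le_rpow (hfg x) hq.le)]
  exact ((ENNReal.orderIsoRpow _ (by positivity)).map_iSup _).le

theorem eLpNorm_tsum_le_tsum_eLpNorm {ι : Type*} [Countable ι] {h : ι → α → ℝ≥0∞}
    (hh : ∀ i, AEMeasurable (h i) μ) (hp : 1 ≤ p) :
    eLpNorm (fun x => ∑' i, h i x) p μ ≤ ∑' i, eLpNorm (h i) p μ := by
  simp only [ENNReal.tsum_eq_iSup_sum]
  refine (eLpNorm_iSup_le_iSup_eLpNorm (F := fun s x => ∑ i ∈ s, h i x)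
    (fun s => Finset.aemeasurable_fun_sum s fun i _ => hh i) ?_).trans (iSup_mono fun s => ?_)
  · exact Monotone.directed_le fun s t hst x => Finset.sum_le_sum_of_subset hst
  · have hsum := eLpNorm_sum_le (s := s) (μ := μ) (fun i _ => (hh i).aestronglyMeasurable) hp
    rwa [Finset.sum_fn] at hsum

theorem eLpNorm_rpow_eq_eLpNorm_div (u : α → ℝ≥0∞) {r : ℝ} (hr : 0 < r) :
    eLpNorm u p μ ^ r = eLpNorm (fun x => u x ^ r) (p / ENNReal.ofReal r) μ := by
  have h := eLpNorm_enorm_rpow (μ := μ) (p := p / ENNReal.ofReal r) u hr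
  simp only [enorm_eq_self] at h
  rw [h, ENNReal.div_mul_cancel (by simpa using hr) ENNReal.ofReal_ne_top]

theorem eLpNorm_tsum_rpow_le {ι : Type*} [Countable ι] {h : ι → α → ℝ≥0∞}
    (hh : ∀ i, AEMeasurable (h i) μ) {r : ℝ} (hr0 : 0 < r) (hr1 : r ≤ 1)
    (hrp : ENNReal.ofReal r ≤ p) :
    eLpNorm (fun x => ∑' i, h i x) p μ ^ r ≤ ∑' i, eLpNorm (h i) p μ ^ r := by
  have ht : 1 ≤ p / ENNReal.ofReal r := by
    rwa [ENNReal.le_div_iff_mul_le (by simp [hr0]) (by simp), one_mul]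
  simp only [eLpNorm_rpow_eq_eLpNorm_div _ hr0]
  calc eLpNorm (fun x => (∑' i, h i x) ^ r) (p / ENNReal.ofReal r) μ
      ≤ eLpNorm (fun x => ∑' i, h i x ^ r) (p / ENNReal.ofReal r) μ :=
        eLpNorm_mono_enorm fun x => ENNReal.rpow_tsum_le_tsum_rpow _ hr0 hr1
    _ ≤ _ := eLpNorm_tsum_le_tsum_eLpNorm (fun i => (hh i).pow_const r) ht

theorem ae_lt_top_of_eLpNorm_ne_top {u : α → ℝ≥0∞} (hu : AEMeasurable u μ) (hp : p ≠ 0)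
    (h : eLpNorm u p μ ≠ ∞) : ∀ᵐ x ∂μ, u x < ∞ := by
  rcases eq_or_ne p ∞ with rfl | hptop
  · rw [eLpNorm_exponent_top] at h
    filter_upwards [ae_le_eLpNormEssSup (μ := μ) (f := u)] with x hx
    exact hx.trans_lt h.lt_top
  have hq : 0 < p.toReal := ENNReal.toReal_pos hp hptop
  rw [eLpNorm_eq_lintegral_rpow_enorm_toReal hp hptop] at h
  have hint : ∫⁻ x, u x ^ p.toReal ∂μ ≠ ∞ := by
    simpa [ENNReal.rpow_eq_top_iff, hq] using h
  filter_upwards [ae_lt_top' (hu.pow_const _) hint] with x hx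
  exact (ENNReal.rpow_lt_top_iff_of_pos hq).1 hx

end LpQuasiTriangle

theorem enorm_mul_ofReal (z : ℂ) {t : ℝ} (ht : 0 ≤ t) : ‖z * t‖ₑ = ‖z‖ₑ * ENNReal.ofReal t := by
  rw [enorm_mul, ← ofReal_norm (t : ℂ), Complex.norm_real, Real.norm_of_nonneg ht]

section SemiDiscreteConvolution

variable {G : Type*} [AddGroup G] {ι : Type*} {ω v : G → ℝ} {C : ℝ}

theorem tsum_enorm_mul_le_of_moderate (hω : ∀ x, 0 ≤ ω x) (hC : 0 ≤ C)
    (hCω : ∀ x y, ω (x + y) ≤ C * ω x * v y) (a : ι → ℂ) (f : G → ℂ) (τ : ι → G) (x : G) :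
    (∑' j, ‖a j * f (x - τ j)‖ₑ) * ENNReal.ofReal (ω x) ≤
      ENNReal.ofReal C *
        ∑' j, ENNReal.ofReal (‖a j‖ * v (τ j)) * ‖f (x - τ j) * ω (x - τ j)‖ₑ := by
  rw [← ENNReal.tsum_mul_right, ← ENNReal.tsum_mul_left]
  refine ENNReal.tsum_le_tsum fun j => ?_
  set y := x - τ j
  have hx : ω x ≤ C * ω y * v (τ j) := by simpa [y] using hCω y (τ j)
  rw [enorm_mul, enorm_mul_ofReal _ (hω y), ← ofReal_norm, ← ofReal_norm,
    ← ENNReal.ofReal_mul (norm_nonneg _), ← ENNReal.ofReal_mul (by positivity),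
    ← ENNReal.ofReal_mul (norm_nonneg _), ← ENNReal.ofReal_mul' (mul_nonneg (norm_nonneg _) (hω y)),
    ← ENNReal.ofReal_mul hC]
  refine ENNReal.ofReal_le_ofReal ?_
  calc ‖a j‖ * ‖f y‖ * ω x ≤ ‖a j‖ * ‖f y‖ * (C * ω y * v (τ j)) := by gcongr
    _ = C * (‖a j‖ * v (τ j) * (‖f y‖ * ω y)) := by ring

variable [MeasurableSpace G] [MeasurableAdd G] {μ : Measure G} [μ.IsAddRightInvariant]
  [Countable ι] {p : ℝ≥0∞} {r : ℝ}

theorem eLpNorm_tsum_mul_translate_le {u : G → ℝ≥0∞} (hu : AEMeasurable u μ) (c : ι → ℝ≥0)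
    (τ : ι → G) (hr0 : 0 < r) (hr1 : r ≤ 1) (hrp : ENNReal.ofReal r ≤ p) :
    eLpNorm (fun x => ∑' i, (c i : ℝ≥0∞) * u (x - τ i)) p μ ≤
      (∑' i, (c i : ℝ≥0∞) ^ r) ^ (1 / r) * eLpNorm u p μ := by
  have hterm (i : ι) :
      eLpNorm (fun x => (c i : ℝ≥0∞) * u (x - τ i)) p μ ≤ c i * eLpNorm u p μ := by
    have htrans : eLpNorm (fun x => u (x - τ i)) p μ = eLpNorm u p μ :=
      eLpNorm_comp_measurePreserving hu.aestronglyMeasurable (measurePreserving_sub_right μ (τ i))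
    rw [← htrans]
    exact eLpNorm_le_nnreal_smul_eLpNorm_of_ae_le_mul' (ae_of_all _ fun x => le_rfl) p
  have hmeas (i : ι) : AEMeasurable (fun x => (c i : ℝ≥0∞) * u (x - τ i)) μ :=
    (hu.comp_quasiMeasurePreserving
      (measurePreserving_sub_right μ (τ i)).quasiMeasurePreserving).const_mul _
  set E := eLpNorm (fun x => ∑' i, (c i : ℝ≥0∞) * u (x - τ i)) p μ
  calc E = (E ^ r) ^ (1 / r) := by
        rw [← ENNReal.rpow_mul, mul_one_div_cancel hr0.ne', ENNReal.rpow_one]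
    _ ≤ (∑' i, ((c i : ℝ≥0∞) * eLpNorm u p μ) ^ r) ^ (1 / r) := by
        gcongr
        exact (eLpNorm_tsum_rpow_le hmeas hr0 hr1 hrp).trans
          (ENNReal.tsum_le_tsum fun i => by gcongr; exact hterm i)
    _ = _ := by
        simp_rw [ENNReal.mul_rpow_of_nonneg _ _ hr0.le]
        rw [ENNReal.tsum_mul_right, ENNReal.mul_rpow_of_nonneg _ _ (by positivity),
          ← ENNReal.rpow_mul, mul_one_div_cancel hr0.ne', ENNReal.rpow_one]

theorem eLpNorm_tsum_enorm_mul_le (hωm : Measurable ω) (hω : ∀ x, 0 ≤ ω x)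
    (hv : ∀ x, 0 ≤ v x) (hC : 0 ≤ C) (hCω : ∀ x y, ω (x + y) ≤ C * ω x * v y) (τ : ι → G)
    (hr0 : 0 < r) (hr1 : r ≤ 1) (hrp : ENNReal.ofReal r ≤ p) {a : ι → ℂ} {f : G → ℂ}
    (ha : Summable fun j => (‖a j‖ * v (τ j)) ^ r) (hf : Measurable f) :
    eLpNorm (fun x => (∑' j, ‖a j * f (x - τ j)‖ₑ) * ENNReal.ofReal (ω x)) p μ ≤
      ENNReal.ofReal (C * (∑' j, (‖a j‖ * v (τ j)) ^ r) ^ (1 / r)) *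
        eLpNorm (fun x => f x * (ω x : ℂ)) p μ := by
  have hc_nonneg (j : ι) : 0 ≤ ‖a j‖ * v (τ j) := mul_nonneg (norm_nonneg _) (hv _)
  have hc : ∑' j, ENNReal.ofReal (‖a j‖ * v (τ j)) ^ r =
      ENNReal.ofReal (∑' j, (‖a j‖ * v (τ j)) ^ r) := by
    rw [ENNReal.ofReal_tsum_of_nonneg (fun j => Real.rpow_nonneg (hc_nonneg j) r) ha]
    exact tsum_congr fun j => ENNReal.ofReal_rpow_of_nonneg (hc_nonneg j) hr0.le
  have hu : AEMeasurable (fun x => ‖f x * (ω x : ℂ)‖ₑ) μ :=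
    (hf.mul (Complex.measurable_ofReal.comp hωm)).enorm.aemeasurable
  calc _ ≤ eLpNorm (fun x => ENNReal.ofReal C *
          ∑' j, ENNReal.ofReal (‖a j‖ * v (τ j)) * ‖f (x - τ j) * ω (x - τ j)‖ₑ) p μ :=
        eLpNorm_mono_enorm fun x => tsum_enorm_mul_le_of_moderate hω hC hCω a f τ x
    _ ≤ ENNReal.ofReal C * eLpNorm (fun x =>
          ∑' j, ENNReal.ofReal (‖a j‖ * v (τ j)) * ‖f (x - τ j) * ω (x - τ j)‖ₑ) p μ :=
        eLpNorm_le_nnreal_smul_eLpNorm_of_ae_le_mul' (ae_of_all _ fun x => le_rfl) p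
    _ ≤ ENNReal.ofReal C * ((∑' j, ENNReal.ofReal (‖a j‖ * v (τ j)) ^ r) ^ (1 / r) *
          eLpNorm (fun x => ‖f x * (ω x : ℂ)‖ₑ) p μ) := by
        gcongr
        exact eLpNorm_tsum_mul_translate_le hu _ τ hr0 hr1 hrp
    _ = _ := by
        rw [hc, eLpNorm_enorm, ENNReal.ofReal_rpow_of_nonneg
          (tsum_nonneg fun j => Real.rpow_nonneg (hc_nonneg j) r) (by positivity),
          ← mul_assoc, ← ENNReal.ofReal_mul hC]

theorem ae_summable_of_eLpNorm_tsum_enorm_mul_ne_top (hωm : Measurable ω) (hω : ∀ x, 0 < ω x)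
    (τ : ι → G) (hp : p ≠ 0) {a : ι → ℂ} {f : G → ℂ} (hf : Measurable f)
    (h : eLpNorm (fun x => (∑' j, ‖a j * f (x - τ j)‖ₑ) * ENNReal.ofReal (ω x)) p μ ≠ ∞) :
    ∀ᵐ x ∂μ, Summable fun j => ‖a j * f (x - τ j)‖ := by
  have hmeas : Measurable fun x => (∑' j, ‖a j * f (x - τ j)‖ₑ) * ENNReal.ofReal (ω x) :=
    (Measurable.tsum fun j => (measurable_const.mul
      (hf.comp (measurePreserving_sub_right μ (τ j)).measurable)).enorm).mul
      (ENNReal.measurable_ofReal.comp hωm)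
  filter_upwards [ae_lt_top_of_eLpNorm_ne_top hmeas.aemeasurable hp h] with x hx
  refine tsum_enorm_ne_top_iff_summable_norm.1 fun htop => ?_
  rw [htop, ENNReal.top_mul (ENNReal.ofReal_pos.2 (hω x)).ne'] at hx
  exact lt_irrefl _ hx

end SemiDiscreteConvolution

theorem stmt9_general (d : ℕ) (ω v : Ed d → ℝ)
    (hω : IsWeight d ω) (hv : IsWeight d v) (hmod : Moderate d ω v)
    (p : ℝ≥0∞) (r : ℝ) (hr : 0 < r) (hrp : ENNReal.ofReal r ≤ min 1 p) :
    ∃ C : ℝ, 0 < C ∧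
      ∀ (a : (Fin d → ℤ) → ℂ) (f : Ed d → ℂ),
        Summable (fun j : Fin d → ℤ => (‖a j‖ * v (intVec d j)) ^ r) →
        Measurable f →
        eLpNorm (fun x => f x * (ω x : ℂ)) p volume < ⊤ →
        (∀ᵐ x : Ed d, Summable fun j : Fin d → ℤ => ‖a j * f (x - intVec d j)‖) ∧
        eLpNorm (fun x => (∑' j : Fin d → ℤ, a j * f (x - intVec d j)) * (ω x : ℂ)) p volume ≤
          ENNReal.ofReal (C * (∑' j : Fin d → ℤ, (‖a j‖ * v (intVec d j)) ^ r) ^ (1/r)) *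
            eLpNorm (fun x => f x * (ω x : ℂ)) p volume := by
  obtain ⟨hωm, hω_pos, -⟩ := hω
  obtain ⟨C, hC, hCω⟩ := hmod
  have hr1 : r ≤ 1 := ENNReal.ofReal_le_one.1 (hrp.trans (min_le_left _ _))
  have hrp' : ENNReal.ofReal r ≤ p := hrp.trans (min_le_right _ _)
  have hp : p ≠ 0 := (lt_of_lt_of_le (ENNReal.ofReal_pos.2 hr) hrp').ne'
  refine ⟨C, hC, fun a f ha hf hfω => ?_⟩
  have hmajor := eLpNorm_tsum_enorm_mul_le (μ := volume) hωm (fun x => (hω_pos x).le)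
    (fun x => (hv.2.1 x).le) hC.le hCω (intVec d) hr hr1 hrp' ha hf
  refine ⟨ae_summable_of_eLpNorm_tsum_enorm_mul_ne_top hωm hω_pos (intVec d) hp hf
    (hmajor.trans_lt (ENNReal.mul_lt_top ENNReal.ofReal_lt_top hfω)).ne,
    (eLpNorm_mono_enorm fun x => ?_).trans hmajor⟩
  rw [enorm_mul_ofReal _ (hω_pos x).le, enorm_eq_self]
  gcongr
  exact enorm_tsum_le_tsum_enorm

/-- quasi-Banach Young-type estimate for the semi-discrete convolution
`(a ∗ f)(x) = ∑_{j∈ℤ^d} a(j)·f(x−j)`: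
`‖(a∗f)·ω‖_{L^p} ≤ C·(∑_j (|a(j)|·v(j))^r)^{1/r}·‖f·ω‖_{L^p}` for `r ∈ (0, min(1,p)]`. -/
theorem stmt9 (d : ℕ) (hd : 1 ≤ d) (ω v : Ed d → ℝ)
    (hω : IsWeight d ω) (hv : IsWeight d v) (hsub : Submult d v) (hmod : Moderate d ω v)
    (p : ℝ≥0∞) (hp : 0 < p) (r : ℝ) (hr : 0 < r) (hrp : ENNReal.ofReal r ≤ min 1 p) :
    ∃ C : ℝ, 0 < C ∧
      ∀ (a : (Fin d → ℤ) → ℂ) (f : Ed d → ℂ),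
        Summable (fun j : Fin d → ℤ => (‖a j‖ * v (intVec d j)) ^ r) →
        Measurable f →
        eLpNorm (fun x => f x * (ω x : ℂ)) p volume < ⊤ →
        (∀ᵐ x : Ed d, Summable fun j : Fin d → ℤ => ‖a j * f (x - intVec d j)‖) ∧
        eLpNorm (fun x => (∑' j : Fin d → ℤ, a j * f (x - intVec d j)) * (ω x : ℂ)) p volume ≤
          ENNReal.ofReal (C * (∑' j : Fin d → ℤ, (‖a j‖ * v (intVec d j)) ^ r) ^ (1/r)) *
            eLpNorm (fun x => f x * (ω x : ℂ)) p volume :=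
  stmt9_general d ω v hω hv hmod p r hr hrp
end
end

section
/- Let d ≥ 1, let ω, v be weights on ℝ^d with v submultiplicative and ω v-moderate, let p ∈ (0,∞] and r ∈ (0, min(1,p)]. Then there exists C > 0 such that for every a: ℤ^d → ℂ with ∑_{j∈ℤ^d} (|a(j)|·v(j))^r < ∞ and every measurable f: ℝ^d → ℂ such that |f| is ℤ^d-periodic and ‖f·ω‖_{L^p([0,1]^d)} < ∞, the semi-discrete convolution (a ∗ f)(x) = ∑_{j∈ℤ^d} a(j)·f(x−j) converges absolutely for almost every x ∈ [0,1]^d and ‖(a ∗ f)·ω‖_{L^p([0,1]^d)} ≤ C·(∑_{j∈ℤ^d} (|a(j)|·v(j))^r)^{1/r}·‖f·ω‖_{L^p([0,1]^d)}. -/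
open MeasureTheory Complex Real
open scoped InnerProductSpace ENNReal

noncomputable section

/-- The cube `[a,b]^d ⊆ ℝ^d`. -/
def cube (d : ℕ) (a b : ℝ) : Set (Ed d) := {x | ∀ i, x i ∈ Set.Icc a b}

/-! Since `|f|` is `ℤ^d`-periodic, every translate `f(x - j)` has the modulus of `f(x)`, so
`|(a ∗ f)(x)| ≤ ‖a‖_{ℓ¹} |f(x)|` pointwise. Evenness and submultiplicativity give
`v(0) ≤ C v(x)²`, so `v` is bounded below by some `c > 0`, whence
`‖a‖_{ℓ¹} ≤ c⁻¹ ‖a v‖_{ℓ¹} ≤ c⁻¹ ‖a v‖_{ℓʳ}` by the embedding `ℓʳ ⊆ ℓ¹` for `r ≤ 1`. -/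

section RpowSum

variable {ι : Type*} {b : ι → ℝ} {r : ℝ}

/-- Each term is `b^r · b^(1-r)`, and `b^r` is bounded by the whole sum. -/
lemma le_rpow_mul_tsum_rpow_rpow (hb : ∀ j, 0 ≤ b j) (hr : 0 < r)
    (hr1 : r ≤ 1) (hs : Summable fun j => b j ^ r) (j : ι) :
    b j ≤ b j ^ r * (∑' i, b i ^ r) ^ ((1 - r) / r) := by
  have hbr : b j ^ r ≤ ∑' i, b i ^ r :=
    hs.le_tsum j fun i _ => rpow_nonneg (hb i) r
  calc b j = b j ^ r * (b j ^ r) ^ ((1 - r) / r) := by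
        rw [← rpow_mul (hb j), mul_div_cancel₀ _ hr.ne', ← rpow_add' (hb j) (by norm_num)]
        norm_num
    _ ≤ b j ^ r * (∑' i, b i ^ r) ^ ((1 - r) / r) :=
        mul_le_mul_of_nonneg_left
          (rpow_le_rpow (rpow_nonneg (hb j) r) hbr (div_nonneg (sub_nonneg.2 hr1) hr.le))
          (rpow_nonneg (hb j) r)

lemma summable_of_summable_rpow (hb : ∀ j, 0 ≤ b j) (hr : 0 < r) (hr1 : r ≤ 1)
    (hs : Summable fun j => b j ^ r) : Summable b :=
  .of_nonneg_of_le hb (le_rpow_mul_tsum_rpow_rpow hb hr hr1 hs) (hs.mul_right _)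

lemma tsum_le_tsum_rpow_rpow_one_div (hb : ∀ j, 0 ≤ b j) (hr : 0 < r) (hr1 : r ≤ 1)
    (hs : Summable fun j => b j ^ r) : ∑' j, b j ≤ (∑' j, b j ^ r) ^ (1 / r) := by
  have hT : 0 ≤ ∑' j, b j ^ r := tsum_nonneg fun j => rpow_nonneg (hb j) r
  have hexp : 1 + (1 - r) / r = 1 / r := by field_simp; ring
  calc ∑' j, b j ≤ ∑' j, b j ^ r * (∑' i, b i ^ r) ^ ((1 - r) / r) :=
        (summable_of_summable_rpow hb hr hr1 hs).tsum_le_tsum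
          (le_rpow_mul_tsum_rpow_rpow hb hr hr1 hs) (hs.mul_right _)
    _ = (∑' j, b j ^ r) ^ (1 / r) := by
        rw [tsum_mul_right, ← hexp, rpow_add' hT (by rw [hexp]; positivity), rpow_one]

end RpowSum

lemma summable_and_tsum_le_of_weighted_rpow {ι : Type*} {u w : ι → ℝ} {c r : ℝ}
    (hu : ∀ j, 0 ≤ u j) (hc : 0 < c) (hcw : ∀ j, c ≤ w j) (hr : 0 < r) (hr1 : r ≤ 1)
    (hs : Summable fun j => (u j * w j) ^ r) :
    Summable u ∧ ∑' j, u j ≤ c⁻¹ * (∑' j, (u j * w j) ^ r) ^ (1 / r) := by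
  have huw : ∀ j, 0 ≤ u j * w j := fun j => mul_nonneg (hu j) (hc.le.trans (hcw j))
  have hle : ∀ j, u j ≤ c⁻¹ * (u j * w j) := fun j => by
    rw [le_inv_mul_iff₀ hc, mul_comm]
    exact mul_le_mul_of_nonneg_left (hcw j) (hu j)
  have hsuw := summable_of_summable_rpow huw hr hr1 hs
  have hsu : Summable u := .of_nonneg_of_le hu hle (hsuw.mul_left _)
  refine ⟨hsu, ?_⟩
  calc ∑' j, u j ≤ ∑' j, c⁻¹ * (u j * w j) := hsu.tsum_le_tsum hle (hsuw.mul_left _)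
    _ = c⁻¹ * ∑' j, u j * w j := tsum_mul_left
    _ ≤ c⁻¹ * (∑' j, (u j * w j) ^ r) ^ (1 / r) := by
        gcongr
        exact tsum_le_tsum_rpow_rpow_one_div huw hr hr1 hs

lemma summable_norm_mul_and_norm_tsum_le {ι R : Type*} [NormedRing R] {a g : ι → R} {M : ℝ}
    (ha : Summable fun j => ‖a j‖) (hg : ∀ j, ‖g j‖ ≤ M) :
    Summable (fun j => ‖a j * g j‖) ∧ ‖∑' j, a j * g j‖ ≤ (∑' j, ‖a j‖) * M := by
  have hle : ∀ j, ‖a j * g j‖ ≤ ‖a j‖ * M := fun j =>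
    (norm_mul_le _ _).trans (mul_le_mul_of_nonneg_left (hg j) (norm_nonneg _))
  have hs : Summable fun j => ‖a j * g j‖ := .of_nonneg_of_le (fun _ => norm_nonneg _) hle
    (ha.mul_right M)
  refine ⟨hs, (norm_tsum_le_tsum_norm hs).trans ?_⟩
  rw [← tsum_mul_right]
  exact hs.tsum_le_tsum hle (ha.mul_right M)

lemma Submult.exists_pos_forall_le {d : ℕ} {v : Ed d → ℝ} (hpos : ∀ x, 0 < v x)
    (hsub : Submult d v) : ∃ c, 0 < c ∧ ∀ x, c ≤ v x := by
  obtain ⟨heven, C, hC, hvC⟩ := hsub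
  refine ⟨√(v 0 / C), sqrt_pos.2 (div_pos (hpos 0) hC), fun x => ?_⟩
  have h0 : v 0 ≤ C * v x * v x := by simpa [heven] using hvC x (-x)
  rw [sqrt_le_left (hpos x).le, div_le_iff₀ hC]
  nlinarith

theorem stmt10_general (d : ℕ) (ω v : Ed d → ℝ)
    (hv : IsWeight d v) (hsub : Submult d v)
    (p : ℝ≥0∞) (r : ℝ) (hr : 0 < r) (hrp : ENNReal.ofReal r ≤ min 1 p) :
    ∃ C : ℝ, 0 < C ∧
      ∀ (a : (Fin d → ℤ) → ℂ) (f : Ed d → ℂ),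
        Summable (fun j : Fin d → ℤ => (‖a j‖ * v (intVec d j)) ^ r) →
        Measurable f →
        (∀ (x : Ed d) (k : Fin d → ℤ), ‖f (x + intVec d k)‖ = ‖f x‖) →
        eLpNorm (fun x => f x * (ω x : ℂ)) p (volume.restrict (cube d 0 1)) < ⊤ →
        (∀ᵐ x ∂(volume.restrict (cube d 0 1)),
            Summable fun j : Fin d → ℤ => ‖a j * f (x - intVec d j)‖) ∧
        eLpNorm (fun x => (∑' j : Fin d → ℤ, a j * f (x - intVec d j)) * (ω x : ℂ)) p
            (volume.restrict (cube d 0 1)) ≤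
          ENNReal.ofReal (C * (∑' j : Fin d → ℤ, (‖a j‖ * v (intVec d j)) ^ r) ^ (1/r)) *
            eLpNorm (fun x => f x * (ω x : ℂ)) p (volume.restrict (cube d 0 1)) := by
  have hr1 : r ≤ 1 := ENNReal.ofReal_le_one.1 (hrp.trans (min_le_left _ _))
  obtain ⟨c, hc, hcv⟩ := hsub.exists_pos_forall_le hv.2.1
  refine ⟨c⁻¹, inv_pos.2 hc, fun a f hsum _ hper _ => ?_⟩
  obtain ⟨ha, haK⟩ := summable_and_tsum_le_of_weighted_rpow (fun j => norm_nonneg (a j)) hc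
    (fun j => hcv (intVec d j)) hr hr1 hsum
  have hbound x := summable_norm_mul_and_norm_tsum_le (g := fun j => f (x - intVec d j)) ha
    fun j => (by rw [← hper _ j, sub_add_cancel] : ‖f (x - intVec d j)‖ ≤ ‖f x‖)
  refine ⟨ae_of_all _ fun x => (hbound x).1,
    eLpNorm_le_mul_eLpNorm_of_ae_le_mul (ae_of_all _ fun x => ?_) p⟩
  rw [norm_mul, norm_mul, ← mul_assoc]
  gcongr
  exact (hbound x).2.trans (mul_le_mul_of_nonneg_right haK (norm_nonneg _))

/-- the periodic version of the semi-discrete convolution estimate: if `|f|` is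
`ℤ^d`-periodic then `‖(a∗f)·ω‖_{L^p([0,1]^d)} ≤ C·(∑_j (|a(j)|·v(j))^r)^{1/r}·‖f·ω‖_{L^p([0,1]^d)}`
for `r ∈ (0, min(1,p)]`. -/
theorem stmt10 (d : ℕ) (hd : 1 ≤ d) (ω v : Ed d → ℝ)
    (hω : IsWeight d ω) (hv : IsWeight d v) (hsub : Submult d v) (hmod : Moderate d ω v)
    (p : ℝ≥0∞) (hp : 0 < p) (r : ℝ) (hr : 0 < r) (hrp : ENNReal.ofReal r ≤ min 1 p) :
    ∃ C : ℝ, 0 < C ∧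
      ∀ (a : (Fin d → ℤ) → ℂ) (f : Ed d → ℂ),
        Summable (fun j : Fin d → ℤ => (‖a j‖ * v (intVec d j)) ^ r) →
        Measurable f →
        (∀ (x : Ed d) (k : Fin d → ℤ), ‖f (x + intVec d k)‖ = ‖f x‖) →
        eLpNorm (fun x => f x * (ω x : ℂ)) p (volume.restrict (cube d 0 1)) < ⊤ →
        (∀ᵐ x ∂(volume.restrict (cube d 0 1)),
            Summable fun j : Fin d → ℤ => ‖a j * f (x - intVec d j)‖) ∧
        eLpNorm (fun x => (∑' j : Fin d → ℤ, a j * f (x - intVec d j)) * (ω x : ℂ)) p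
            (volume.restrict (cube d 0 1)) ≤
          ENNReal.ofReal (C * (∑' j : Fin d → ℤ, (‖a j‖ * v (intVec d j)) ^ r) ^ (1/r)) *
            eLpNorm (fun x => f x * (ω x : ℂ)) p (volume.restrict (cube d 0 1)) :=
  stmt10_general d ω v hv hsub p r hr hrp

end
end
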